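/- Let X(t) solve the Winfree model with dispersion max_{i,j}|xᵢ(t)−xⱼ(t)| < D on [0,t*], and let μ(t) = (1/N)Σ_k x_k(t). Then |1 − κ P(μ(t)) R(μ(t)) − μ'(t)| ≤ γ + C̃ κ D for all t ∈ [0,t*], where C̃ = ‖P'‖_∞‖R‖_∞ + ‖P‖_∞‖R'‖_∞. -/

import Mathlib

/-!
Averaging the equations gives `μ' = (1/N) ∑ₖ ωₖ − (κ/N²) ∑ₖ ∑ⱼ P(xⱼ) R(xₖ)`, so
`1 − κ P(μ) R(μ) − μ'` is the average of `1 − ωₖ`, of size at most `γ`, plus `κ` times the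
average of `P(xⱼ) R(xₖ) − P(μ) R(μ)`. Every phase lies within `D` of the mean `μ`, so by the mean
value theorem each of these differences is at most `C̃ D`. The suprema defining `C̃` are finite
because `P`, `R` and their derivatives are continuous and periodic.
-/

open Real Finset

namespace Function.Periodic

variable {f : ℝ → ℝ} {c : ℝ}

theorem deriv (h : Periodic f c) : Periodic (_root_.deriv f) c := fun y => by
  rw [← deriv_comp_add_const, show (fun z => f (z + c)) = f from funext h]

theorem bddAbove_range_abs (h : Periodic f c) (hc : c ≠ 0) (hf : Continuous f) :
    BddAbove (Set.range fun y => |f y|) :=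
  ((h.comp abs).compact_of_continuous hc (continuous_abs.comp hf)).bddAbove

theorem abs_le_iSup_abs (h : Periodic f c) (hc : c ≠ 0) (hf : Continuous f) (y : ℝ) :
    |f y| ≤ ⨆ y, |f y| :=
  le_ciSup (h.bddAbove_range_abs hc hf) y

end Function.Periodic

theorem abs_sub_le_iSup_abs_deriv_mul {f : ℝ → ℝ} (hf : Differentiable ℝ f)
    (hbdd : BddAbove (Set.range fun y => |deriv f y|)) (a b : ℝ) :
    |f a - f b| ≤ (⨆ y, |deriv f y|) * |a - b| := by
  simpa only [Real.norm_eq_abs] using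
    convex_univ.norm_image_sub_le_of_norm_deriv_le (fun y _ => hf y)
      (fun y _ => le_ciSup hbdd y) (Set.mem_univ b) (Set.mem_univ a)

theorem Function.Periodic.abs_sub_le_iSup_abs_deriv_mul {f : ℝ → ℝ} {c : ℝ}
    (h : Function.Periodic f c) (hc : c ≠ 0) (hf : ContDiff ℝ 1 f) (a b : ℝ) :
    |f a - f b| ≤ (⨆ y, |_root_.deriv f y|) * |a - b| :=
  _root_.abs_sub_le_iSup_abs_deriv_mul (hf.differentiable one_ne_zero)
    (h.deriv.bddAbove_range_abs hc (hf.continuous_deriv le_rfl)) a b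

theorem abs_mul_sub_mul_le {p q r s A B : ℝ} (hp : |p| ≤ A) (hs : |s| ≤ B) :
    |p * r - q * s| ≤ |p - q| * B + A * |r - s| :=
  calc |p * r - q * s| = |(p - q) * s + p * (r - s)| := by ring_nf
    _ ≤ |p - q| * |s| + |p| * |r - s| := by rw [← abs_mul, ← abs_mul]; exact abs_add_le _ _
    _ ≤ |p - q| * B + A * |r - s| := by gcongr

section Mean

variable {ι : Type*} [Fintype ι]

theorem abs_sum_div_card_le [Nonempty ι] {f : ι → ℝ} {B : ℝ} (h : ∀ i, |f i| ≤ B) :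
    |(∑ i, f i) / Fintype.card ι| ≤ B := by
  have hn : (0 : ℝ) < Fintype.card ι := by exact_mod_cast Fintype.card_pos
  rw [abs_div, abs_of_pos hn, div_le_iff₀ hn]
  calc |∑ i, f i| ≤ ∑ i, |f i| := abs_sum_le_sum_abs _ _
    _ ≤ ∑ _i : ι, B := sum_le_sum fun i _ => h i
    _ = B * Fintype.card ι := by simp [mul_comm]

theorem abs_sub_sum_div_card_le [Nonempty ι] {x : ι → ℝ} {j : ι} {D : ℝ}
    (h : ∀ k, |x k - x j| ≤ D) : |x j - (∑ k, x k) / Fintype.card ι| ≤ D := by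
  have hn : (Fintype.card ι : ℝ) ≠ 0 := by exact_mod_cast Fintype.card_ne_zero
  have hmean : (∑ k, x k) / Fintype.card ι - x j = (∑ k, (x k - x j)) / Fintype.card ι := by
    rw [sum_sub_distrib, sum_const, card_univ, nsmul_eq_mul]
    field_simp
  rw [abs_sub_comm, hmean]
  exact abs_sum_div_card_le h

theorem one_sub_mul_sub_sum_meanField_eq [Nonempty ι] (ω a b : ι → ℝ) (κ c : ℝ) :
    1 - κ * c - (∑ k, (ω k - κ / Fintype.card ι * ∑ j, a j * b k)) / Fintype.card ι
      = (∑ k, (1 - ω k)) / Fintype.card ι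
        + κ * ((∑ k, (∑ j, (a j * b k - c)) / Fintype.card ι) / Fintype.card ι) := by
  have hn : (Fintype.card ι : ℝ) ≠ 0 := by exact_mod_cast Fintype.card_ne_zero
  simp only [sum_sub_distrib, sum_const, card_univ, nsmul_eq_mul, ← mul_sum, ← sum_div]
  field_simp
  ring

theorem abs_one_sub_meanField_le [Nonempty ι] {P R : ℝ → ℝ} {Pmax Rmax LP LR κ γ D : ℝ}
    (hPmax : ∀ y, |P y| ≤ Pmax) (hRmax : ∀ y, |R y| ≤ Rmax)
    (hLP : ∀ a b, |P a - P b| ≤ LP * |a - b|)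
    (hLR : ∀ a b, |R a - R b| ≤ LR * |a - b|)
    (hκ : 0 ≤ κ) (ω x : ι → ℝ) (hω : ∀ k, |1 - ω k| ≤ γ) (hx : ∀ j k, |x j - x k| ≤ D) :
    |1 - κ * P ((∑ k, x k) / Fintype.card ι) * R ((∑ k, x k) / Fintype.card ι)
      - (∑ k, (ω k - κ / Fintype.card ι * ∑ j, P (x j) * R (x k))) / Fintype.card ι|
      ≤ γ + (LP * Rmax + Pmax * LR) * κ * D := by
  set μ := (∑ k, x k) / Fintype.card ι
  have hμ : ∀ j, |x j - μ| ≤ D := fun j => abs_sub_sum_div_card_le fun k => hx k j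
  have hLP0 : 0 ≤ LP := by simpa using (abs_nonneg _).trans (hLP 1 0)
  have hLR0 : 0 ≤ LR := by simpa using (abs_nonneg _).trans (hLR 1 0)
  have hRmax0 : 0 ≤ Rmax := (abs_nonneg _).trans (hRmax 0)
  have hPmax0 : 0 ≤ Pmax := (abs_nonneg _).trans (hPmax 0)
  have hpair : ∀ j k, |P (x j) * R (x k) - P μ * R μ| ≤ (LP * Rmax + Pmax * LR) * D := by
    intro j k
    calc |P (x j) * R (x k) - P μ * R μ|
        ≤ |P (x j) - P μ| * Rmax + Pmax * |R (x k) - R μ| :=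
          abs_mul_sub_mul_le (hPmax _) (hRmax _)
      _ ≤ LP * D * Rmax + Pmax * (LR * D) := by
          gcongr
          · exact (hLP _ _).trans (by gcongr; exact hμ j)
          · exact (hLR _ _).trans (by gcongr; exact hμ k)
      _ = (LP * Rmax + Pmax * LR) * D := by ring
  rw [mul_assoc κ, one_sub_mul_sub_sum_meanField_eq]
  refine (abs_add_le _ _).trans ?_
  rw [abs_mul, abs_of_nonneg hκ]
  calc _ ≤ γ + κ * ((LP * Rmax + Pmax * LR) * D) := by
        gcongr
        · exact abs_sum_div_card_le hω
        · exact abs_sum_div_card_le fun k => abs_sum_div_card_le fun j => hpair j k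
    _ = γ + (LP * Rmax + Pmax * LR) * κ * D := by ring

end Mean

theorem stmt5_general (N : ℕ) (hN : 0 < N) (P R : ℝ → ℝ)
    (hP : ContDiff ℝ 2 P) (hR : ContDiff ℝ 2 R)
    (hPper : Function.Periodic P (2 * π)) (hRper : Function.Periodic R (2 * π))
    (κ γ D tstar : ℝ) (hκ : 0 < κ)
    (ω : Fin N → ℝ) (hω : ∀ i, ω i ∈ Set.Ioo (1 - γ) (1 + γ))
    (x : Fin N → ℝ → ℝ)
    (hode : ∀ i t, HasDerivAt (x i)
      (ω i - (κ / N) * ∑ j, P (x j t) * R (x i t)) t)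
    (hdisp : ∀ t ∈ Set.Icc (0:ℝ) tstar, ∀ i j, |x i t - x j t| < D)
    (Ct : ℝ)
    (hCt : Ct = (⨆ y : ℝ, |deriv P y|) * (⨆ y : ℝ, |R y|)
            + (⨆ y : ℝ, |P y|) * (⨆ y : ℝ, |deriv R y|)) :
    ∀ t ∈ Set.Icc (0:ℝ) tstar,
      |1 - κ * P ((∑ k, x k t) / N) * R ((∑ k, x k t) / N)
        - deriv (fun u => (∑ k, x k u) / N) t| ≤ γ + Ct * κ * D := by
  intro t ht
  have : Nonempty (Fin N) := Fin.pos_iff_nonempty.mp hN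
  have hπ : 2 * π ≠ 0 := two_pi_pos.ne'
  have hmean : HasDerivAt (fun u => (∑ k, x k u) / N)
      ((∑ k, (ω k - κ / N * ∑ j, P (x j t) * R (x k t))) / N) t :=
    (HasDerivAt.fun_sum fun k _ => hode k t).div_const N
  have hω' : ∀ k, |1 - ω k| ≤ γ := fun k =>
    (abs_sub_lt_iff.2 ⟨by linarith [(hω k).1], by linarith [(hω k).2]⟩).le
  have key := abs_one_sub_meanField_le (hPper.abs_le_iSup_abs hπ hP.continuous)
    (hRper.abs_le_iSup_abs hπ hR.continuous)
    (hPper.abs_sub_le_iSup_abs_deriv_mul hπ (hP.of_le one_le_two))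
    (hRper.abs_sub_le_iSup_abs_deriv_mul hπ (hR.of_le one_le_two))
    hκ.le ω (x · t) hω' fun j k => (hdisp t ht j k).le
  rw [hmean.deriv, hCt]
  simpa only [Fintype.card_fin] using key

theorem stmt5 (N : ℕ) (hN : 0 < N) (P R : ℝ → ℝ)
    (hP : ContDiff ℝ 2 P) (hR : ContDiff ℝ 2 R)
    (hPper : Function.Periodic P (2 * π)) (hRper : Function.Periodic R (2 * π))
    (κ γ D tstar : ℝ) (hκ : 0 < κ) (hγ : γ ∈ Set.Ioo (0:ℝ) 1) (hD : 0 < D)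
    (ω : Fin N → ℝ) (hω : ∀ i, ω i ∈ Set.Ioo (1 - γ) (1 + γ))
    (x : Fin N → ℝ → ℝ)
    (hode : ∀ i t, HasDerivAt (x i)
      (ω i - (κ / N) * ∑ j, P (x j t) * R (x i t)) t)
    (hdisp : ∀ t ∈ Set.Icc (0:ℝ) tstar, ∀ i j, |x i t - x j t| < D)
    (Ct : ℝ)
    (hCt : Ct = (⨆ y : ℝ, |deriv P y|) * (⨆ y : ℝ, |R y|)
            + (⨆ y : ℝ, |P y|) * (⨆ y : ℝ, |deriv R y|)) :
    ∀ t ∈ Set.Icc (0:ℝ) tstar,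
      |1 - κ * P ((∑ k, x k t) / N) * R ((∑ k, x k t) / N)
        - deriv (fun u => (∑ k, x k u) / N) t| ≤ γ + Ct * κ * D :=
  stmt5_general N hN P R hP hR hPper hRper κ γ D tstar hκ ω hω x hode hdisp Ct hCt
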